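/- Let ε ∈ (0,1), let n ≥ 1 be an integer, let g(t) := sin²(t/2)/t² (with g(0) := 1/4), and let M_n(t) := ∫_{−πn}^{πn} |s|^ε g(t − s) ds. Then there is an absolute constant C > 0 such that for every t with |t| < πn/2, the derivative satisfies |M_n'(t)| ≤ C ( n^{ε−2} + ε (1 + |t|)^{ε−1} ). -/

import Mathlib

/-!
Write `M_n(t) = ∫₀^a s^ε (g(t + s) + g(t - s)) ds` with `a = πn` and integrate by parts against an
antiderivative of `g`; differentiating under the integral sign then gives
`M_n'(t) = a^ε (g(t + a) - g(t - a)) - ε ∫₀^a s^(ε-1) (g(t + s) - g(t - s)) ds`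
without ever differentiating `g`. For `|t| ≤ a/2` the boundary term is `O(a^(ε-2))`, so, thanks to
the factor `ε`, it remains to bound `∫₀^a s^(ε-1) |g(x + s) - g(x - s)| ds` by `O((1 + x)^(ε-1))`
for `x = |t|`. For `s ≤ x/2` (or `s ≤ 2` when `x ≤ 1`) this uses that `g = sinc(·/2)² / 4` is
Lipschitz, with constant `O(x⁻²)` away from the origin; for `x/2 ≤ s ≤ 2x` the decay
`g(u) ≤ 2 / (1 + u²)` bounds the integral of the difference; for `s ≥ 2x` both terms are `O(s⁻²)`.
-/

open MeasureTheory

/-- `g(t) := sin²(t/2)/t²`, extended continuously by `g(0) = 1/4`. -/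
noncomputable def gAux (t : ℝ) : ℝ :=
  if t = 0 then 1 / 4 else Real.sin (t / 2) ^ 2 / t ^ 2

/-- `M_n(t) := ∫_{-πn}^{πn} |s|^ε g(t - s) ds`. -/
noncomputable def MAux (ε : ℝ) (n : ℕ) (t : ℝ) : ℝ :=
  ∫ s in (-(Real.pi * n))..(Real.pi * n), |s| ^ ε * gAux (t - s)

open Real Set intervalIntegral

namespace Real

theorem sinc_eq_integral_cos (a : ℝ) : sinc a = ∫ x in (0 : ℝ)..1, cos (a * x) := by
  rcases eq_or_ne a 0 with rfl | ha
  · simp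
  · rw [integral_comp_mul_left (fun x => cos x) ha, integral_cos, sinc_of_ne_zero ha]
    simp [div_eq_inv_mul]

theorem abs_sinc_sub_sinc_le (a b : ℝ) : |sinc a - sinc b| ≤ |a - b| := by
  rw [sinc_eq_integral_cos, sinc_eq_integral_cos, ← intervalIntegral.integral_sub
    ((by fun_prop : Continuous fun x => cos (a * x)).intervalIntegrable 0 1)
    ((by fun_prop : Continuous fun x => cos (b * x)).intervalIntegrable 0 1)]
  have h := norm_integral_le_of_norm_le_const (a := 0) (b := 1) (C := |a - b|)
    (f := fun x => cos (a * x) - cos (b * x)) fun x hx => by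
      rw [uIoc_of_le zero_le_one] at hx
      calc |cos (a * x) - cos (b * x)| ≤ |a * x - b * x| := abs_cos_sub_cos_le _ _
        _ = |a - b| * x := by rw [← sub_mul, abs_mul, abs_of_pos hx.1]
        _ ≤ |a - b| := mul_le_of_le_one_right (abs_nonneg _) hx.2
  simpa using h

theorem abs_sinc_le_inv_abs {x : ℝ} (hx : x ≠ 0) : |sinc x| ≤ |x|⁻¹ := by
  rw [sinc_of_ne_zero hx, abs_div, div_eq_mul_inv]
  exact mul_le_of_le_one_left (by positivity) (abs_sin_le_one x)

theorem abs_sinc_sub_sinc_le_of_le {k a b : ℝ} (hk : 0 < k) (ha : k ≤ a) (hb : k ≤ b) :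
    |sinc a - sinc b| ≤ |a - b| * (1 / k + 1 / k ^ 2) := by
  have ha0 : 0 < a := hk.trans_le ha
  have hb0 : 0 < b := hk.trans_le hb
  have hsplit : sinc a - sinc b = (sin a - sin b) / a + sin b * (b - a) / (a * b) := by
    rw [sinc_of_ne_zero ha0.ne', sinc_of_ne_zero hb0.ne']
    field_simp
    ring
  have h1 : |(sin a - sin b) / a| ≤ |a - b| / k := by
    rw [abs_div, abs_of_pos ha0]
    exact div_le_div₀ (abs_nonneg _) (abs_sin_sub_sin_le a b) hk ha
  have h2 : |sin b * (b - a) / (a * b)| ≤ |a - b| / k ^ 2 := by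
    rw [abs_div, abs_mul, abs_sub_comm, abs_of_pos (mul_pos ha0 hb0), sq]
    exact div_le_div₀ (abs_nonneg _) (mul_le_of_le_one_left (abs_nonneg _) (abs_sin_le_one b))
      (by positivity) (mul_le_mul ha hb hk.le ha0.le)
  rw [hsplit, mul_add, mul_one_div, mul_one_div]
  exact (abs_add_le _ _).trans (add_le_add h1 h2)

end Real

theorem gAux_eq_sinc (u : ℝ) : gAux u = sinc (u / 2) ^ 2 / 4 := by
  rcases eq_or_ne u 0 with rfl | hu
  · simp [gAux]
  · rw [gAux, if_neg hu, sinc_of_ne_zero (div_ne_zero hu two_ne_zero)]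
    field_simp
    ring

@[fun_prop]
theorem continuous_gAux : Continuous gAux := by
  simp_rw [funext gAux_eq_sinc]
  fun_prop

theorem gAux_neg (u : ℝ) : gAux (-u) = gAux u := by
  simp [gAux_eq_sinc, neg_div, sinc_neg]

theorem gAux_nonneg (u : ℝ) : 0 ≤ gAux u := by
  rw [gAux_eq_sinc]
  positivity

theorem gAux_le_quarter (u : ℝ) : gAux u ≤ 1 / 4 := by
  rw [gAux_eq_sinc]
  have := (sq_le_one_iff_abs_le_one _).2 (abs_sinc_le_one (u / 2))
  linarith

theorem gAux_le_inv_sq {u : ℝ} (hu : u ≠ 0) : gAux u ≤ 1 / u ^ 2 := by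
  rw [gAux, if_neg hu]
  gcongr
  exact sin_sq_le_one _

theorem gAux_le_two_div_one_add_sq (u : ℝ) : gAux u ≤ 2 / (1 + u ^ 2) := by
  rcases le_or_gt (u ^ 2) 1 with hu | hu
  · refine (gAux_le_quarter u).trans ?_
    rw [div_le_div_iff₀ (by norm_num) (by positivity)]
    linarith
  · refine (gAux_le_inv_sq (by rintro rfl; norm_num at hu)).trans ?_
    rw [div_le_div_iff₀ (by positivity) (by positivity)]
    linarith

theorem gAux_sub_gAux (u v : ℝ) :
    gAux u - gAux v = (sinc (u / 2) - sinc (v / 2)) * (sinc (u / 2) + sinc (v / 2)) / 4 := by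
  rw [gAux_eq_sinc, gAux_eq_sinc]
  ring

theorem abs_gAux_sub_le (u v : ℝ) : |gAux u - gAux v| ≤ |u - v| / 4 := by
  have hsum : |sinc (u / 2) + sinc (v / 2)| ≤ 2 :=
    (abs_add_le _ _).trans (by linarith [abs_sinc_le_one (u / 2), abs_sinc_le_one (v / 2)])
  have hdiff : |sinc (u / 2) - sinc (v / 2)| ≤ |u - v| / 2 := by
    refine (abs_sinc_sub_sinc_le _ _).trans_eq ?_
    rw [← sub_div, abs_div, abs_two]
  rw [gAux_sub_gAux, abs_div, abs_mul, abs_of_pos (by norm_num : (0 : ℝ) < 4)]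
  calc |sinc (u / 2) - sinc (v / 2)| * |sinc (u / 2) + sinc (v / 2)| / 4
      ≤ |u - v| / 2 * 2 / 4 := by gcongr
    _ = |u - v| / 4 := by ring

theorem abs_gAux_sub_le_of_le {m u v : ℝ} (hm : 0 < m) (hu : m ≤ u) (hv : m ≤ v) :
    |gAux u - gAux v| ≤ |u - v| * (1 / m ^ 2 + 2 / m ^ 3) := by
  have hk : 0 < m / 2 := half_pos hm
  have hsinc : ∀ w, m ≤ w → |sinc (w / 2)| ≤ 2 / m := fun w hw => by
    have hw2 : m / 2 ≤ w / 2 := by linarith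
    refine (abs_sinc_le_inv_abs (hk.trans_le hw2).ne').trans ?_
    rw [abs_of_pos (hk.trans_le hw2), ← one_div, div_le_div_iff₀ (hk.trans_le hw2) hm]
    linarith
  have hsum : |sinc (u / 2) + sinc (v / 2)| ≤ 4 / m :=
    (abs_add_le _ _).trans ((add_le_add (hsinc u hu) (hsinc v hv)).trans_eq (by ring))
  have hdiff := abs_sinc_sub_sinc_le_of_le hk (by linarith : m / 2 ≤ u / 2)
    (by linarith : m / 2 ≤ v / 2)
  rw [← sub_div, abs_div, abs_two] at hdiff
  rw [gAux_sub_gAux, abs_div, abs_mul, abs_of_pos (by norm_num : (0 : ℝ) < 4)]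
  calc |sinc (u / 2) - sinc (v / 2)| * |sinc (u / 2) + sinc (v / 2)| / 4
      ≤ |u - v| / 2 * (1 / (m / 2) + 1 / (m / 2) ^ 2) * (4 / m) / 4 := by gcongr
    _ = |u - v| * (1 / m ^ 2 + 2 / m ^ 3) := by field_simp

theorem intervalIntegral.integral_neg_self_eq_integral_add_comp_neg {E : Type*}
    [NormedAddCommGroup E] [NormedSpace ℝ E] {f : ℝ → E} (hf : Continuous f) (a : ℝ) :
    ∫ s in -a..a, f s = ∫ s in (0 : ℝ)..a, (f s + f (-s)) := by
  rw [← integral_add_adjacent_intervals (hf.intervalIntegrable (-a) 0)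
      (hf.intervalIntegrable 0 a), integral_add (hf.intervalIntegrable 0 a)
      ((by fun_prop : Continuous fun s => f (-s)).intervalIntegrable 0 a),
    add_comm, integral_comp_neg, neg_zero]

theorem integral_rpow_mul_eq_sub {ε : ℝ} (hε : 0 < ε) {Ψ ψ : ℝ → ℝ}
    (hΨ : ∀ s, HasDerivAt Ψ (ψ s) s) (hψ : Continuous ψ) (a : ℝ) :
    ∫ s in (0 : ℝ)..a, s ^ ε * ψ s = a ^ ε * Ψ a - ε * ∫ s in (0 : ℝ)..a, s ^ (ε - 1) * Ψ s := by
  have hΨc : Continuous Ψ := continuous_iff_continuousAt.2 fun s => (hΨ s).continuousAt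
  rw [integral_mul_deriv_eq_deriv_mul_of_hasDerivAt (u' := fun s => ε * s ^ (ε - 1))
    (continuous_rpow_const hε.le).continuousOn hΨc.continuousOn
    (fun s hs => hasDerivAt_rpow_const (Or.inl ?_)) (fun s _ => hΨ s)
    ((intervalIntegrable_rpow' (by linarith)).const_mul ε) (hψ.intervalIntegrable 0 a),
    zero_rpow hε.ne', zero_mul, sub_zero]
  · simp only [mul_assoc, intervalIntegral.integral_const_mul]
  · rintro rfl
    simp only [mem_Ioo, min_lt_iff, lt_max_iff, lt_irrefl, false_or] at hs
    exact lt_asymm hs.1 hs.2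

theorem hasDerivAt_integral_mul_sub_sub {w : ℝ → ℝ} {a b : ℝ}
    (hw : IntervalIntegrable w volume a b) {Φ φ : ℝ → ℝ} (hΦ : ∀ x, HasDerivAt Φ (φ x) x)
    (hφ : Continuous φ) (t : ℝ) :
    HasDerivAt (fun t => ∫ s in a..b, w s * (Φ (t + s) - Φ (t - s)))
      (∫ s in a..b, w s * (φ (t + s) - φ (t - s))) t := by
  have hΦc : Continuous Φ := continuous_iff_continuousAt.2 fun x => (hΦ x).continuousAt
  set R := |a| + |b| with hR
  obtain ⟨C, hC⟩ := (isCompact_closedBall (0 : ℝ) (|t| + 1 + R)).exists_bound_of_continuousOn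
    hφ.continuousOn
  have hwm := hw.def'.aestronglyMeasurable
  refine (hasDerivAt_integral_of_dominated_loc_of_deriv_le
    (F := fun x s => w s * (Φ (x + s) - Φ (x - s)))
    (F' := fun x s => w s * (φ (x + s) - φ (x - s))) (bound := fun s => ‖w s‖ * (2 * C))
    (Metric.ball_mem_nhds t one_pos)
    (Filter.Eventually.of_forall fun x => hwm.mul (by fun_prop : Continuous
      fun s => Φ (x + s) - Φ (x - s)).aestronglyMeasurable)
    (hw.mul_continuousOn (by fun_prop : Continuous fun s => Φ (t + s) - Φ (t - s)).continuousOn)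
    (hwm.mul (by fun_prop : Continuous fun s => φ (t + s) - φ (t - s)).aestronglyMeasurable)
    (Filter.Eventually.of_forall fun s hs x hx => ?_) (hw.norm.mul_const _)
    (Filter.Eventually.of_forall fun s _ x _ => ?_)).2
  · have hsR : |s| ≤ R := by
      have h := uIcc_subset_Icc (a₁ := a) (b₁ := b) (a₂ := -R) (b₂ := R)
        ⟨by linarith [neg_abs_le a, abs_nonneg b], by linarith [le_abs_self a, abs_nonneg b]⟩
        ⟨by linarith [neg_abs_le b, abs_nonneg a], by linarith [le_abs_self b, abs_nonneg a]⟩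
        (uIoc_subset_uIcc hs)
      exact abs_le.2 h
    have hxt : |x - t| < 1 := by simpa [Real.dist_eq] using hx
    have hball : ∀ y, |y - x| ≤ R → ‖φ y‖ ≤ C := fun y hy => hC y (by
      rw [Metric.mem_closedBall, Real.dist_eq, sub_zero]
      linarith [abs_sub_abs_le_abs_sub y x, abs_sub_abs_le_abs_sub x t])
    rw [norm_mul, two_mul]
    gcongr
    refine (norm_sub_le _ _).trans (add_le_add (hball _ ?_) (hball _ ?_))
    · simpa using hsR
    · simpa [abs_neg] using hsR
  · exact (((hΦ (x + s)).comp_add_const x s).sub ((hΦ (x - s)).comp_sub_const x s)).const_mul (w s)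

theorem hasDerivAt_integral_abs_rpow_mul_comp_sub {ε : ℝ} (hε : 0 < ε) {φ : ℝ → ℝ}
    (hφ : Continuous φ) {a : ℝ} (ha : 0 ≤ a) (t : ℝ) :
    HasDerivAt (fun t => ∫ s in -a..a, |s| ^ ε * φ (t - s))
      (a ^ ε * (φ (t + a) - φ (t - a))
        - ε * ∫ s in (0 : ℝ)..a, s ^ (ε - 1) * (φ (t + s) - φ (t - s))) t := by
  set Φ := fun x => ∫ u in (0 : ℝ)..x, φ u
  have hΦ : ∀ x, HasDerivAt Φ (φ x) x := fun x => (hφ.integral_hasStrictDerivAt 0 x).hasDerivAt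
  have hM : (fun t => ∫ s in -a..a, |s| ^ ε * φ (t - s)) = fun t => a ^ ε * (Φ (t + a) - Φ (t - a))
      - ε * ∫ s in (0 : ℝ)..a, s ^ (ε - 1) * (Φ (t + s) - Φ (t - s)) := by
    funext t
    have hΨ : ∀ s, HasDerivAt (fun s => Φ (t + s) - Φ (t - s)) (φ (t + s) + φ (t - s)) s :=
      fun s => (((hΦ (t + s)).comp_const_add t s).sub
        ((hΦ (t - s)).comp_const_sub t s)).congr_deriv (sub_neg_eq_add _ _)
    rw [integral_neg_self_eq_integral_add_comp_neg (f := fun s => |s| ^ ε * φ (t - s))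
      ((continuous_abs.rpow_const fun _ => Or.inr hε.le).mul (by fun_prop)),
      ← integral_rpow_mul_eq_sub hε hΨ (by fun_prop) a]
    refine integral_congr fun s hs => ?_
    rw [uIcc_of_le ha] at hs
    simp only [abs_neg, abs_of_nonneg hs.1, sub_neg_eq_add]
    ring
  rw [hM]
  exact ((((hΦ (t + a)).comp_add_const t a).sub
    ((hΦ (t - a)).comp_sub_const t a)).const_mul _).sub
    ((hasDerivAt_integral_mul_sub_sub (intervalIntegrable_rpow' (r := ε - 1) (by linarith)) hΦ hφ
      t).const_mul ε)

noncomputable def gDiff (t s : ℝ) : ℝ := gAux (t + s) - gAux (t - s)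

theorem continuous_gDiff (t : ℝ) : Continuous (gDiff t) := by
  unfold gDiff
  fun_prop

theorem gDiff_neg_left (t s : ℝ) : gDiff (-t) s = -gDiff t s := by
  rw [gDiff, gDiff, show -t + s = -(t - s) by ring, show -t - s = -(t + s) by ring, gAux_neg,
    gAux_neg, neg_sub]

theorem abs_gDiff_le (t s : ℝ) : |gDiff t s| ≤ |s| / 2 := by
  refine (abs_gAux_sub_le _ _).trans_eq ?_
  rw [show t + s - (t - s) = 2 * s by ring, abs_mul, abs_two]
  ring

theorem abs_gDiff_le_of_le_half {x s : ℝ} (hx : 1 ≤ x) (hs0 : 0 ≤ s) (hs : s ≤ x / 2) :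
    |gDiff x s| ≤ 40 * s / x ^ 2 := by
  have hx0 : 0 < x := by linarith
  refine (abs_gAux_sub_le_of_le (half_pos hx0) (by linarith) (by linarith)).trans ?_
  rw [show x + s - (x - s) = 2 * s by ring, abs_of_nonneg (by linarith)]
  have h3 : 16 / x ^ 3 ≤ 16 / x ^ 2 :=
    div_le_div_of_nonneg_left (by norm_num) (by positivity) (pow_le_pow_right₀ hx (by norm_num))
  calc 2 * s * (1 / (x / 2) ^ 2 + 2 / (x / 2) ^ 3) = 2 * s * (4 / x ^ 2 + 16 / x ^ 3) := by
        field_simp; ring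
    _ ≤ 2 * s * (4 / x ^ 2 + 16 / x ^ 2) := by gcongr
    _ = 40 * s / x ^ 2 := by ring

theorem abs_gDiff_le_two_div {x s : ℝ} (hx : 0 ≤ x) (hs : 0 ≤ s) :
    |gDiff x s| ≤ 2 / (1 + (s - x) ^ 2) := by
  refine abs_sub_le_of_nonneg_of_le (gAux_nonneg _) ?_ (gAux_nonneg _) ?_
  · exact (gAux_le_two_div_one_add_sq _).trans
      (div_le_div_of_nonneg_left (by norm_num) (by positivity) (by nlinarith))
  · exact (gAux_le_two_div_one_add_sq _).trans_eq (by ring)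

theorem abs_gDiff_le_four_div_sq {t s : ℝ} (hs : 0 < s) (ht : 2 * |t| ≤ s) :
    |gDiff t s| ≤ 4 / s ^ 2 := by
  have key : ∀ u, s / 2 ≤ |u| → gAux u ≤ 4 / s ^ 2 := fun u hu => by
    have hu0 : 0 < |u| := by linarith
    refine (gAux_le_inv_sq (abs_pos.1 hu0)).trans ?_
    rw [← sq_abs u, div_le_div_iff₀ (by positivity) (by positivity)]
    nlinarith
  refine abs_sub_le_of_nonneg_of_le (gAux_nonneg _) (key _ ?_) (gAux_nonneg _) (key _ ?_)
  · exact (by linarith [neg_abs_le t, le_abs_self t] : s / 2 ≤ t + s).trans (le_abs_self _)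
  · rw [abs_sub_comm]
    exact (by linarith [neg_abs_le t, le_abs_self t] : s / 2 ≤ s - t).trans (le_abs_self _)

theorem Real.rpow_le_mul_rpow_of_le_mul {p q c r : ℝ} (hq0 : 0 < q) (hc : 1 ≤ c)
    (hq : q ≤ c * p) (hr : -1 ≤ r) (hr0 : r ≤ 0) : p ^ r ≤ c * q ^ r := by
  have hc0 : 0 < c := by linarith
  have hp : 0 < p := pos_of_mul_pos_right (hq0.trans_le hq) hc0.le
  have h1 : (c * p) ^ r ≤ q ^ r := rpow_le_rpow_of_nonpos hq0 hq hr0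
  have h2 : c ^ (-1 : ℝ) ≤ c ^ r := rpow_le_rpow_of_exponent_le hc hr
  rw [rpow_neg_one] at h2
  rw [mul_rpow hc0.le hp.le] at h1
  calc p ^ r = c * (c⁻¹ * p ^ r) := by field_simp
    _ ≤ c * (c ^ r * p ^ r) := by gcongr
    _ ≤ c * q ^ r := by gcongr

section WeightedIntegrals

variable {ε : ℝ}

theorem intervalIntegrable_rpow_mul_gDiff (hε : 0 < ε) (x a b : ℝ) :
    IntervalIntegrable (fun s => s ^ (ε - 1) * gDiff x s) volume a b :=
  (intervalIntegrable_rpow' (by linarith)).mul_continuousOn (continuous_gDiff x).continuousOn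

theorem abs_integral_rpow_mul_gDiff_zero_two_le (hε0 : 0 ≤ ε) (hε1 : ε ≤ 1) (x : ℝ) :
    |∫ s in (0 : ℝ)..2, s ^ (ε - 1) * gDiff x s| ≤ 2 := by
  have h := norm_integral_le_of_norm_le_const (a := 0) (b := 2) (C := 1)
    (f := fun s => s ^ (ε - 1) * gDiff x s) fun s hs => by
      rw [uIoc_of_le zero_le_two] at hs
      obtain ⟨hs0, hs2⟩ := hs
      rw [Real.norm_eq_abs, abs_mul, abs_of_pos (rpow_pos_of_pos hs0 _)]
      calc s ^ (ε - 1) * |gDiff x s| ≤ s ^ (ε - 1) * (s / 2) := by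
            gcongr
            exact (abs_gDiff_le x s).trans_eq (by rw [abs_of_pos hs0])
        _ = s ^ ε / 2 := by rw [rpow_sub_one hs0.ne']; field_simp
        _ ≤ 2 ^ ε / 2 := by gcongr
        _ ≤ 2 ^ (1 : ℝ) / 2 := by gcongr; exact one_le_two
        _ = 1 := by norm_num
  simpa using h

theorem abs_integral_rpow_mul_gDiff_zero_half_le (hε0 : 0 ≤ ε) {x : ℝ} (hx : 1 ≤ x) :
    |∫ s in (0 : ℝ)..(x / 2), s ^ (ε - 1) * gDiff x s| ≤ 10 * (x / 2) ^ (ε - 1) := by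
  have hx0 : 0 < x / 2 := by linarith
  have h := norm_integral_le_of_norm_le_const (a := 0) (b := x / 2)
    (C := 40 * (x / 2) ^ ε / x ^ 2) (f := fun s => s ^ (ε - 1) * gDiff x s) fun s hs => by
      rw [uIoc_of_le hx0.le] at hs
      obtain ⟨hs0, hs2⟩ := hs
      rw [Real.norm_eq_abs, abs_mul, abs_of_pos (rpow_pos_of_pos hs0 _)]
      calc s ^ (ε - 1) * |gDiff x s| ≤ s ^ (ε - 1) * (40 * s / x ^ 2) := by
            gcongr
            exact abs_gDiff_le_of_le_half hx hs0.le hs2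
        _ = 40 * s ^ ε / x ^ 2 := by rw [rpow_sub_one hs0.ne']; field_simp
        _ ≤ 40 * (x / 2) ^ ε / x ^ 2 := by gcongr
  refine (by simpa using h : _ ≤ 40 * (x / 2) ^ ε / x ^ 2 * |x / 2|).trans_eq ?_
  rw [abs_of_pos hx0, rpow_sub_one hx0.ne']
  field_simp
  ring

theorem abs_integral_rpow_mul_gDiff_half_two_mul_le (hε1 : ε ≤ 1) {x : ℝ} (hx : 0 < x) :
    |∫ s in (x / 2)..(2 * x), s ^ (ε - 1) * gDiff x s| ≤ 2 * π * (x / 2) ^ (ε - 1) := by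
  have hx2 : 0 < x / 2 := half_pos hx
  have h := norm_integral_le_of_norm_le (μ := volume) (by linarith : x / 2 ≤ 2 * x)
    (f := fun s => s ^ (ε - 1) * gDiff x s)
    (g := fun s => (x / 2) ^ (ε - 1) * 2 * (1 + (s - x) ^ 2)⁻¹)
    (Filter.Eventually.of_forall fun s hs => by
      have hs0 : 0 < s := hx2.trans hs.1
      rw [Real.norm_eq_abs, abs_mul, abs_of_pos (rpow_pos_of_pos hs0 _), mul_assoc,
        ← div_eq_mul_inv]
      exact mul_le_mul (rpow_le_rpow_of_nonpos hx2 hs.1.le (by linarith))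
        (abs_gDiff_le_two_div hx.le hs0.le) (abs_nonneg _) (by positivity))
    ((continuous_const.mul ((by fun_prop : Continuous fun s : ℝ => 1 + (s - x) ^ 2).inv₀
      fun s => by positivity)).intervalIntegrable _ _)
  refine h.trans ?_
  rw [intervalIntegral.integral_const_mul,
    intervalIntegral.integral_comp_sub_right (fun u : ℝ => (1 + u ^ 2)⁻¹), integral_inv_one_add_sq]
  have harctan : arctan (2 * x - x) - arctan (x / 2 - x) ≤ π := by
    linarith [arctan_lt_pi_div_two (2 * x - x), neg_pi_div_two_lt_arctan (x / 2 - x)]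
  nlinarith [rpow_pos_of_pos hx2 (ε - 1)]

theorem abs_integral_rpow_mul_gDiff_tail_le (hε1 : ε ≤ 1) {x a b : ℝ} (hb : 0 < b) (hba : b ≤ a)
    (hx : 2 * |x| ≤ b) : |∫ s in b..a, s ^ (ε - 1) * gDiff x s| ≤ 4 * b ^ (ε - 2) := by
  have h0 : (0 : ℝ) ∉ uIcc b a := by
    rw [uIcc_of_le hba]
    exact fun h => hb.not_ge h.1
  have h := norm_integral_le_of_norm_le (μ := volume) hba
    (f := fun s => s ^ (ε - 1) * gDiff x s) (g := fun s => 4 * s ^ (ε - 3))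
    (Filter.Eventually.of_forall fun s hs => by
      have hs0 : 0 < s := hb.trans_le hs.1.le
      rw [Real.norm_eq_abs, abs_mul, abs_of_pos (rpow_pos_of_pos hs0 _)]
      calc s ^ (ε - 1) * |gDiff x s| ≤ s ^ (ε - 1) * (4 / s ^ 2) := by
            gcongr
            exact abs_gDiff_le_four_div_sq hs0 (hx.trans hs.1.le)
        _ = 4 * s ^ (ε - 3) := by
            rw [show ε - 3 = ε - 1 - 2 by ring, rpow_sub hs0 (ε - 1) 2, rpow_two]
            ring)
    ((intervalIntegrable_rpow (Or.inr h0)).const_mul 4)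
  refine h.trans ?_
  rw [intervalIntegral.integral_const_mul, integral_rpow (Or.inr ⟨by linarith, h0⟩),
    show ε - 3 + 1 = ε - 2 by ring]
  have hab : a ^ (ε - 2) ≤ b ^ (ε - 2) := rpow_le_rpow_of_nonpos hb hba (by linarith)
  have ha0 : 0 ≤ a ^ (ε - 2) := rpow_nonneg (hb.le.trans hba) _
  refine mul_le_mul_of_nonneg_left ?_ (by norm_num)
  rw [div_le_iff_of_neg (by linarith)]
  nlinarith [rpow_nonneg hb.le (ε - 2)]

theorem abs_integral_rpow_mul_gDiff_le_of_le_one (hε0 : 0 < ε) (hε1 : ε ≤ 1) {x a : ℝ}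
    (hx0 : 0 ≤ x) (hx1 : x ≤ 1) (ha : 2 ≤ a) :
    |∫ s in (0 : ℝ)..a, s ^ (ε - 1) * gDiff x s| ≤ 6 := by
  have hI := intervalIntegrable_rpow_mul_gDiff hε0 x
  rw [← integral_add_adjacent_intervals (hI 0 2) (hI 2 a)]
  have h1 := abs_integral_rpow_mul_gDiff_zero_two_le hε0.le hε1 x
  have h2 := abs_integral_rpow_mul_gDiff_tail_le hε1 two_pos ha
    (by rw [abs_of_nonneg hx0]; linarith)
  have h3 : (2 : ℝ) ^ (ε - 2) ≤ 1 := rpow_le_one_of_one_le_of_nonpos one_le_two (by linarith)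
  exact (abs_add_le _ _).trans (by linarith)

theorem abs_integral_rpow_mul_gDiff_le_of_one_le (hε0 : 0 < ε) (hε1 : ε ≤ 1) {x a : ℝ}
    (hx : 1 ≤ x) (hxa : 2 * x ≤ a) :
    |∫ s in (0 : ℝ)..a, s ^ (ε - 1) * gDiff x s| ≤ 22 * (x / 2) ^ (ε - 1) := by
  have hI := intervalIntegrable_rpow_mul_gDiff hε0 x
  rw [← integral_add_adjacent_intervals (hI 0 (2 * x)) (hI (2 * x) a),
    ← integral_add_adjacent_intervals (hI 0 (x / 2)) (hI (x / 2) (2 * x))]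
  have h1 := abs_integral_rpow_mul_gDiff_zero_half_le hε0.le hx
  have h2 := abs_integral_rpow_mul_gDiff_half_two_mul_le hε1 (x := x) (by linarith)
  have h3 := abs_integral_rpow_mul_gDiff_tail_le hε1 (by linarith : (0 : ℝ) < 2 * x) hxa
    (by rw [abs_of_nonneg (by linarith : 0 ≤ x)])
  have h4 : (2 * x) ^ (ε - 2) ≤ (x / 2) ^ (ε - 1) :=
    calc (2 * x) ^ (ε - 2) ≤ (2 * x) ^ (ε - 1) :=
          rpow_le_rpow_of_exponent_le (by linarith) (by linarith)
      _ ≤ (x / 2) ^ (ε - 1) := rpow_le_rpow_of_nonpos (by linarith) (by linarith) (by linarith)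
  have hy := rpow_pos_of_pos (by linarith : (0 : ℝ) < x / 2) (ε - 1)
  refine (abs_add_le _ _).trans ((add_le_add_left (abs_add_le _ _) _).trans ?_)
  nlinarith [pi_le_four]

theorem abs_integral_mul_gDiff_abs (w : ℝ → ℝ) (t a : ℝ) :
    |∫ s in (0 : ℝ)..a, w s * gDiff |t| s| = |∫ s in (0 : ℝ)..a, w s * gDiff t s| := by
  rcases le_total 0 t with ht | ht
  · rw [abs_of_nonneg ht]
  · rw [abs_of_nonpos ht]
    simp only [gDiff_neg_left, mul_neg, intervalIntegral.integral_neg, abs_neg]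

theorem abs_integral_rpow_mul_gDiff_le (hε0 : 0 < ε) (hε1 : ε ≤ 1) {t a : ℝ} (ha : 2 ≤ a)
    (hta : 2 * |t| ≤ a) :
    |∫ s in (0 : ℝ)..a, s ^ (ε - 1) * gDiff t s| ≤ 88 * (1 + |t|) ^ (ε - 1) := by
  rw [← abs_integral_mul_gDiff_abs]
  have hx := abs_nonneg t
  rcases le_total |t| 1 with hx1 | hx1
  · have h := rpow_le_mul_rpow_of_le_mul (p := 1) (c := 2) (r := ε - 1)
      (by linarith : 0 < 1 + |t|) one_le_two (by linarith) (by linarith) (by linarith)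
    rw [one_rpow] at h
    linarith [abs_integral_rpow_mul_gDiff_le_of_le_one hε0 hε1 hx hx1 ha]
  · have h := rpow_le_mul_rpow_of_le_mul (p := |t| / 2) (c := 4) (r := ε - 1)
      (by linarith : 0 < 1 + |t|) (by norm_num) (by linarith) (by linarith) (by linarith)
    linarith [abs_integral_rpow_mul_gDiff_le_of_one_le hε0 hε1 hx1 hta]

end WeightedIntegrals

theorem abs_rpow_mul_gDiff_le (ε : ℝ) {a t : ℝ} (ha : 0 < a) (ht : 2 * |t| ≤ a) :
    |a ^ ε * gDiff t a| ≤ 4 * a ^ (ε - 2) := by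
  rw [abs_mul, abs_of_pos (rpow_pos_of_pos ha ε)]
  calc a ^ ε * |gDiff t a| ≤ a ^ ε * (4 / a ^ 2) := by
        gcongr
        exact abs_gDiff_le_four_div_sq ha ht
    _ = 4 * a ^ (ε - 2) := by rw [rpow_sub ha, rpow_two]; ring

/-- There is an absolute constant `C > 0` such that for every `ε ∈ (0,1)`, `n ≥ 1` and
`|t| < πn/2`, `|M_n'(t)| ≤ C (n^{ε-2} + ε (1 + |t|)^{ε-1})`. -/
theorem MAux_deriv_bound :
    ∃ C : ℝ, 0 < C ∧
      ∀ ε : ℝ, ε ∈ Set.Ioo (0 : ℝ) 1 →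
        ∀ n : ℕ, 1 ≤ n →
          ∀ t : ℝ, |t| < Real.pi * n / 2 →
            |deriv (MAux ε n) t| ≤ C * ((n : ℝ) ^ (ε - 2) + ε * (1 + |t|) ^ (ε - 1)) := by
  refine ⟨88, by norm_num, ?_⟩
  rintro ε ⟨hε0, hε1⟩ n hn t ht
  have hn1 : (1 : ℝ) ≤ n := Nat.one_le_cast.2 hn
  have hna : (n : ℝ) ≤ π * n := le_mul_of_one_le_left (by linarith) (by linarith [pi_gt_three])
  have ha2 : 2 ≤ π * n := by nlinarith [pi_gt_three]
  have hta : 2 * |t| ≤ π * n := by linarith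
  have hM : HasDerivAt (MAux ε n) ((π * n) ^ ε * gDiff t (π * n)
      - ε * ∫ s in (0 : ℝ)..π * n, s ^ (ε - 1) * gDiff t s) t :=
    hasDerivAt_integral_abs_rpow_mul_comp_sub hε0 continuous_gAux (by linarith) t
  rw [hM.deriv]
  have hboundary : |(π * n) ^ ε * gDiff t (π * n)| ≤ 4 * (n : ℝ) ^ (ε - 2) :=
    (abs_rpow_mul_gDiff_le ε (by linarith : (0 : ℝ) < π * n) hta).trans
      (mul_le_mul_of_nonneg_left (rpow_le_rpow_of_nonpos (by positivity) hna (by linarith))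
        zero_le_four)
  have hintegral := abs_integral_rpow_mul_gDiff_le hε0 hε1.le ha2 hta
  calc _ ≤ |(π * n) ^ ε * gDiff t (π * n)|
        + ε * |∫ s in (0 : ℝ)..π * n, s ^ (ε - 1) * gDiff t s| :=
        (abs_sub _ _).trans_eq (by rw [abs_mul ε, abs_of_pos hε0])
    _ ≤ 4 * (n : ℝ) ^ (ε - 2) + ε * (88 * (1 + |t|) ^ (ε - 1)) := by gcongr
    _ ≤ 88 * ((n : ℝ) ^ (ε - 2) + ε * (1 + |t|) ^ (ε - 1)) := by
        linarith [rpow_nonneg (Nat.cast_nonneg n : (0 : ℝ) ≤ n) (ε - 2)]
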